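/- arXiv:2402.10530 — 5 statements merged into one kernel-verified Lean document; each statement's English description precedes it below -/
import Mathlib

section
/- If X and Y are finite simplicial complexes and X is collapsible, then the join X * Y is collapsible. -/
open Finset

attribute [local instance] Classical.propDecidable

noncomputable section

universe u v

/-- A finite abstract simplicial complex: a finite collection of nonempty finite sets
closed under taking nonempty subsets. -/
def IsComplex {V : Type u} (X : Finset (Finset V)) : Prop :=
  (∀ s ∈ X, s.Nonempty) ∧ ∀ s ∈ X, ∀ t : Finset V, t ⊆ s → t.Nonempty → t ∈ X

/-- `s` is a maximal simplex (facet) of `X`. -/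
def IsFacet {V : Type u} (X : Finset (Finset V)) (s : Finset V) : Prop :=
  s ∈ X ∧ ∀ t ∈ X, s ⊆ t → t = s

/-- An elementary collapse: `σ` is a free face of `X` whose unique maximal coface is `τ`,
and `Y` results from removing all simplices containing `σ`. -/
def ElemCollapse {V : Type u} (X Y : Finset (Finset V)) : Prop :=
  ∃ σ τ : Finset V, σ ∈ X ∧ IsFacet X τ ∧ σ ⊂ τ ∧
    (∀ t ∈ X, σ ⊆ t → t ⊆ τ) ∧ Y = X.filter (fun s => ¬ σ ⊆ s)

/-- `X` simplicially collapses onto `Y`. -/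
def Collapses {V : Type u} (X Y : Finset (Finset V)) : Prop :=
  Relation.ReflTransGen ElemCollapse X Y

/-- `X` is collapsible: it collapses to a single vertex. -/
def Collapsible {V : Type u} (X : Finset (Finset V)) : Prop :=
  ∃ v : V, Collapses X {{v}}

/-- The vertex `v` is dominated by the vertex `w ≠ v`: every facet containing `v`
contains `w`. -/
def Dominated {V : Type u} (X : Finset (Finset V)) (v w : V) : Prop :=
  w ≠ v ∧ ∀ s : Finset V, IsFacet X s → v ∈ s → w ∈ s

/-- An elementary strong collapse: deletion of a dominated vertex. -/
def ElemStrongCollapse {V : Type u} (X Y : Finset (Finset V)) : Prop :=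
  ∃ v w : V, {v} ∈ X ∧ Dominated X v w ∧ Y = X.filter (fun s => v ∉ s)

/-- `X` strongly collapses onto `Y`. -/
def StrongCollapses {V : Type u} (X Y : Finset (Finset V)) : Prop :=
  Relation.ReflTransGen ElemStrongCollapse X Y

/-- `X` is strongly collapsible: it strongly collapses to a single vertex. -/
def StrongCollapsible {V : Type u} (X : Finset (Finset V)) : Prop :=
  ∃ v : V, StrongCollapses X {{v}}

/-- The set of vertices of a complex. -/
def vertexSet {V : Type u} (X : Finset (Finset V)) : Finset V := X.sup id

/-- The link of a simplex `σ` in `X`. -/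
def linkC {V : Type u} (X : Finset (Finset V)) (σ : Finset V) : Finset (Finset V) :=
  X.filter (fun η => Disjoint η σ ∧ η ∪ σ ∈ X)

/-- The face-deletion of `σ` in `X`. -/
def faceDeletion {V : Type u} (X : Finset (Finset V)) (σ : Finset V) : Finset (Finset V) :=
  X.filter (fun η => ¬ σ ⊆ η)

/-- The simplicial join of two complexes (on disjoint vertex sets, via `Sum`). -/
def joinC {A : Type u} {B : Type v} (X : Finset (Finset A)) (Y : Finset (Finset B)) :
    Finset (Finset (A ⊕ B)) :=
  (((insert (∅ : Finset A) X) ×ˢ (insert (∅ : Finset B) Y)).image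
      (fun p => p.1.image Sum.inl ∪ p.2.image Sum.inr)).filter (·.Nonempty)

/-- The flag (clique) complex on the admissible vertices (those satisfying `P`) of a
finite type, with respect to a (reflexive, symmetric) compatibility relation `R`:
simplices are the nonempty finite sets of admissible vertices that are pairwise
compatible. -/
def cliqueComplex {A : Type u} [Fintype A] (P : A → Prop) (R : A → A → Prop) :
    Finset (Finset A) :=
  Finset.univ.filter (fun s : Finset A =>
    s.Nonempty ∧ (∀ a ∈ s, P a) ∧ ∀ a ∈ s, ∀ b ∈ s, R a b)

/-- A complex is a cone if some vertex lies in every maximal simplex. -/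
def IsCone {A : Type u} (X : Finset (Finset A)) : Prop :=
  ∃ v : A, {v} ∈ X ∧ ∀ s, IsFacet X s → v ∈ s

/-- Simplicial isomorphism (onto): `Y` is the image of `X` under an injection of
vertices. -/
def Isom {A : Type u} {B : Type v} (X : Finset (Finset A)) (Y : Finset (Finset B)) : Prop :=
  ∃ f : A → B, Function.Injective f ∧ Y = X.image (fun s => s.image f)

/-! An elementary collapse of `X` along a free pair `(σ, τ)` lifts to `X * Y`: for each
`η ∈ Y ∪ {∅}`, taken in order of decreasing size, `σ ⊔ η` is a free face of what is left, with
unique facet `τ ⊔ η`, and collapsing it removes exactly the simplices `α ⊔ η` with `σ ⊆ α`.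
So `X * Y` collapses to `{v} * Y`, a cone, which collapses to its apex by the same procedure
applied to the free pair `(∅, {v})` of the augmented complex `{∅, {v}}`. -/

section Sum

variable {A : Type u} {B : Type v}

def IsFreePair {V : Type u} (X : Finset (Finset V)) (σ τ : Finset V) : Prop :=
  σ ∈ X ∧ IsFacet X τ ∧ σ ⊂ τ ∧ ∀ t ∈ X, σ ⊆ t → t ⊆ τ

theorem IsFreePair.insert_empty {V : Type u} {X : Finset (Finset V)} {σ τ : Finset V}
    (h : IsFreePair X σ τ) (hσ : σ.Nonempty) : IsFreePair (insert ∅ X) σ τ := by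
  obtain ⟨hσX, ⟨hτX, hτmax⟩, hστ, hfree⟩ := h
  refine ⟨mem_insert_of_mem hσX, ⟨mem_insert_of_mem hτX, fun t ht hτt => ?_⟩, hστ,
    fun t ht hσt => ?_⟩
  · rcases mem_insert.1 ht with rfl | ht
    · exact absurd (subset_empty.1 hτt) (hσ.mono hστ.subset).ne_empty
    · exact hτmax t ht hτt
  · rcases mem_insert.1 ht with rfl | ht
    · exact absurd (subset_empty.1 hσt) hσ.ne_empty
    · exact hfree t ht hσt

theorem mem_joinC {X : Finset (Finset A)} {Y : Finset (Finset B)} {s : Finset (A ⊕ B)} :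
    s ∈ joinC X Y ↔ s.toLeft ∈ insert ∅ X ∧ s.toRight ∈ insert ∅ Y ∧ s.Nonempty := by
  have himage (α : Finset A) (η : Finset B) : α.image Sum.inl ∪ η.image Sum.inr = α.disjSum η := by
    ext x; cases x <;> simp
  simp only [joinC, mem_filter, mem_image, mem_product, Prod.exists, himage, disjSum_eq_iff]
  constructor
  · rintro ⟨⟨α, η, ⟨hα, hη⟩, rfl, rfl⟩, hs⟩
    exact ⟨hα, hη, hs⟩
  · rintro ⟨hα, hη, hs⟩
    exact ⟨⟨_, _, ⟨hα, hη⟩, rfl, rfl⟩, hs⟩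

theorem nonempty_disjSum {α : Finset A} {η : Finset B} :
    (α.disjSum η).Nonempty ↔ α.Nonempty ∨ η.Nonempty := by
  simp only [nonempty_iff_ne_empty, ne_eq, disjSum_eq_empty, not_and_or]

end Sum

section Layers

variable {A : Type u} {B : Type v} {X : Finset (Finset A)} {Y : Finset (Finset B)}
  {σ τ : Finset A}

theorem elemCollapse_joinC_filter_insert (hστ : IsFreePair (insert ∅ X) σ τ)
    {E : Finset (Finset B)} {η : Finset B} (hη : η ∈ insert ∅ Y) (hne : (σ.disjSum η).Nonempty)
    (hηE : η ∉ E) (hE : ∀ η' ∈ insert ∅ Y, η ⊂ η' → η' ∈ E) :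
    ElemCollapse ((joinC X Y).filter fun s => ¬(σ ⊆ s.toLeft ∧ s.toRight ∈ E))
      ((joinC X Y).filter fun s => ¬(σ ⊆ s.toLeft ∧ s.toRight ∈ insert η E)) := by
  obtain ⟨hσX, ⟨hτX, hτmax⟩, hστ, hfree⟩ := hστ
  have hcoface : ∀ s ∈ joinC X Y, ¬(σ ⊆ s.toLeft ∧ s.toRight ∈ E) →
      σ ⊆ s.toLeft → η ⊆ s.toRight → s.toLeft ⊆ τ ∧ s.toRight = η := by
    intro s hs hsE hσs hηs
    obtain ⟨hL, hR, -⟩ := mem_joinC.1 hs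
    refine ⟨hfree _ hL hσs, ?_⟩
    by_contra hRη
    exact hsE ⟨hσs, hE _ hR (hηs.ssubset_of_ne (Ne.symm hRη))⟩
  have hmem : ∀ α ∈ insert ∅ X, (α.disjSum η).Nonempty →
      α.disjSum η ∈ (joinC X Y).filter fun s => ¬(σ ⊆ s.toLeft ∧ s.toRight ∈ E) := by
    intro α hα hαη
    simp only [mem_filter, mem_joinC, toLeft_disjSum, toRight_disjSum]
    exact ⟨⟨hα, hη, hαη⟩, fun h => hηE h.2⟩
  have hτη : τ.disjSum η ∈ (joinC X Y).filter fun s => ¬(σ ⊆ s.toLeft ∧ s.toRight ∈ E) :=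
    hmem τ hτX (hne.mono (disjSum_mono hστ.subset subset_rfl))
  refine ⟨σ.disjSum η, τ.disjSum η, hmem σ hσX hne, ⟨hτη, fun t ht hτt => ?_⟩,
    disjSum_ssubset_disjSum_of_ssubset_of_subset hστ subset_rfl, fun t ht hσt => ?_, ?_⟩
  · obtain ⟨htJ, htE⟩ := mem_filter.1 ht
    obtain ⟨hτL, hηR⟩ := disjSum_subset.1 hτt
    obtain ⟨hL, hR⟩ := hcoface t htJ htE (hστ.subset.trans hτL) hηR
    rw [eq_disjSum_iff]
    exact ⟨hτmax _ (mem_joinC.1 htJ).1 hτL, hR⟩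
  · obtain ⟨htJ, htE⟩ := mem_filter.1 ht
    obtain ⟨hσL, hηR⟩ := disjSum_subset.1 hσt
    obtain ⟨hL, hR⟩ := hcoface t htJ htE hσL hηR
    exact subset_disjSum.2 ⟨hL, hR.le⟩
  · ext s
    simp only [mem_filter, and_assoc, disjSum_subset, mem_insert]
    refine and_congr_right fun hs => ?_
    constructor
    · intro h
      refine ⟨fun h' => h ⟨h'.1, Or.inr h'.2⟩, fun ⟨hσL, hηR⟩ => h ⟨hσL, ?_⟩⟩
      obtain ⟨-, hR⟩ := hcoface s hs (fun h' => h ⟨h'.1, Or.inr h'.2⟩) hσL hηR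
      exact Or.inl hR
    · rintro ⟨hsE, hsη⟩ ⟨hσL, rfl | hR⟩
      · exact hsη ⟨hσL, subset_rfl⟩
      · exact hsE ⟨hσL, hR⟩

theorem collapses_joinC_filter (hστ : IsFreePair (insert ∅ X) σ τ) (T : Finset (Finset B))
    (hT : T ⊆ insert ∅ Y) (hup : ∀ η ∈ T, ∀ η' ∈ insert ∅ Y, η ⊆ η' → η' ∈ T)
    (hne : ∀ η ∈ T, (σ.disjSum η).Nonempty) :
    Collapses (joinC X Y) ((joinC X Y).filter fun s => ¬(σ ⊆ s.toLeft ∧ s.toRight ∈ T)) := by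
  induction T using Finset.strongInduction with
  | H T ih =>
  obtain rfl | hTne := T.eq_empty_or_nonempty
  · simp only [notMem_empty, and_false, not_false_eq_true, filter_true]
    exact .refl
  obtain ⟨η, hηT, hηmin⟩ := T.exists_min_image card hTne
  have hupErase : ∀ ζ ∈ T.erase η, ∀ η' ∈ insert ∅ Y, ζ ⊆ η' → η' ∈ T.erase η := by
    intro ζ hζ η' hη' hζη'
    obtain ⟨hζη, hζT⟩ := mem_erase.1 hζ
    refine mem_erase.2 ⟨?_, hup ζ hζT η' hη' hζη'⟩
    rintro rfl
    exact (card_lt_card (hζη'.ssubset_of_ne hζη)).not_ge (hηmin ζ hζT)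
  have hrest := ih (T.erase η) (erase_ssubset hηT) ((erase_subset η T).trans hT) hupErase
    (fun ζ hζ => hne ζ (mem_of_mem_erase hζ))
  have hlast := elemCollapse_joinC_filter_insert (Y := Y) hστ (hT hηT) (hne η hηT)
    (notMem_erase η T) (fun η' hη' hηη' => mem_erase.2 ⟨hηη'.ne', hup η hηT η' hη' hηη'.subset⟩)
  rw [insert_erase hηT] at hlast
  exact hrest.tail hlast

end Layers

section Collapse

variable {A : Type u} {B : Type v}

theorem Collapses.nonempty_of_nonempty {V : Type u} {X X' : Finset (Finset V)}
    (h : Collapses X X') (hX' : X'.Nonempty) : X.Nonempty := by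
  rcases Relation.ReflTransGen.cases_head h with rfl | ⟨_, ⟨σ, _, hσX, -⟩, -⟩
  exacts [hX', ⟨σ, hσX⟩]

theorem ElemCollapse.collapses_joinC {X X' : Finset (Finset A)} (h : ElemCollapse X X')
    (hX' : X'.Nonempty) (Y : Finset (Finset B)) : Collapses (joinC X Y) (joinC X' Y) := by
  obtain ⟨σ, τ, hσX, hτ, hστ, hfree, rfl⟩ := h
  have hσ : σ.Nonempty := by
    obtain ⟨s, hs⟩ := hX'
    exact nonempty_iff_ne_empty.2 fun hσ => (mem_filter.1 hs).2 (hσ ▸ empty_subset s)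
  have hpair : IsFreePair (insert ∅ X) σ τ := IsFreePair.insert_empty ⟨hσX, hτ, hστ, hfree⟩ hσ
  convert collapses_joinC_filter (Y := Y) hpair (insert ∅ Y) subset_rfl
    (fun _ _ η' hη' _ => hη') (fun η _ => nonempty_disjSum.2 (.inl hσ)) using 1
  ext s
  simp only [mem_filter, mem_joinC, mem_insert, and_assoc]
  have hσL : s.toLeft = ∅ → ¬σ ⊆ s.toLeft := fun hL hσL => hσ.ne_empty (subset_empty.1 (hL ▸ hσL))
  tauto

theorem Collapses.joinC {X X' : Finset (Finset A)} (h : Collapses X X') (hX' : X'.Nonempty)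
    (Y : Finset (Finset B)) : Collapses (joinC X Y) (joinC X' Y) := by
  induction h using Relation.ReflTransGen.head_induction_on with
  | refl => exact .refl
  | head hstep hrest ih =>
    exact (hstep.collapses_joinC (Collapses.nonempty_of_nonempty hrest hX') Y).trans ih

theorem collapses_joinC_singleton (v : A) (Y : Finset (Finset B)) :
    Collapses (joinC {{v}} Y) {{Sum.inl v}} := by
  have hpair : IsFreePair (insert ∅ {{v}}) ∅ {v} := by
    refine ⟨mem_insert_self _ _, ⟨by simp, ?_⟩, empty_ssubset.2 (singleton_nonempty v), ?_⟩ <;>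
      simp
  have hup : ∀ η ∈ Y.filter (·.Nonempty), ∀ η' ∈ insert ∅ Y, η ⊆ η' →
      η' ∈ Y.filter (·.Nonempty) := by
    intro η hη η' hη' hηη'
    have hη'ne : η'.Nonempty := (mem_filter.1 hη).2.mono hηη'
    exact mem_filter.2 ⟨(mem_insert.1 hη').resolve_left hη'ne.ne_empty, hη'ne⟩
  convert collapses_joinC_filter hpair (Y.filter (·.Nonempty))
    ((filter_subset _ _).trans (subset_insert _ _)) hup
    (fun η hη => nonempty_disjSum.2 (.inr (mem_filter.1 hη).2)) using 1
  ext s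
  have hsingleton : ({Sum.inl v} : Finset (A ⊕ B)) = ({v} : Finset A).disjSum ∅ := by
    simp [disjSum_empty]
  have hs : s.Nonempty ↔ s.toLeft.Nonempty ∨ s.toRight.Nonempty := by
    rw [← nonempty_disjSum, toLeft_disjSum_toRight]
  simp only [mem_filter, mem_joinC, mem_insert, mem_singleton, empty_subset, true_and, hs,
    hsingleton, eq_disjSum_iff, ← not_nonempty_iff_eq_empty]
  have hv : s.toLeft = {v} → s.toLeft.Nonempty := fun h => h ▸ singleton_nonempty v
  tauto

end Collapse

theorem stmt0_general {A : Type u} {B : Type v} (X : Finset (Finset A)) (Y : Finset (Finset B))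
    (h : Collapsible X) :
    Collapsible (joinC X Y) := by
  obtain ⟨v, hv⟩ := h
  exact ⟨Sum.inl v, (hv.joinC (singleton_nonempty _) Y).trans (collapses_joinC_singleton v Y)⟩

/-- Welker. If `X` and `Y` are finite simplicial complexes and `X` is
collapsible, then the join `X * Y` is collapsible. -/
theorem stmt0 {A : Type u} {B : Type v} (X : Finset (Finset A)) (Y : Finset (Finset B))
    (hX : IsComplex X) (hY : IsComplex Y) (h : Collapsible X) :
    Collapsible (joinC X Y) :=
  stmt0_general X Y h
end
end

section
/- Let X be a finite simplicial complex and σ a simplex of X such that the link of σ in X is collapsible. Then X simplicially collapses onto the face-deletion of σ in X. -/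
open Finset

attribute [local instance] Classical.propDecidable

noncomputable section

universe u v

/-!
Taking `η ↦ η ∪ σ` identifies the link of `σ` with the simplices of `X` strictly containing `σ`.
A free face `α` of the link with maximal coface `β` thus gives the free face `α ∪ σ` of `X` with
maximal coface `β ∪ σ`; collapsing it leaves the face-deletion of `σ` unchanged and acts on the
link as the original collapse. Following a collapse of the link to a vertex `v` this way, `σ`
ends up as a free face of `σ ∪ {v}`, and one last collapse leaves exactly the face-deletion.
-/

section

variable {V : Type u} {X : Finset (Finset V)} {σ τ ρ α β η t : Finset V}

@[simp]
lemma mem_linkC : η ∈ linkC X σ ↔ η ∈ X ∧ Disjoint η σ ∧ η ∪ σ ∈ X := by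
  simp only [linkC, mem_filter]

@[simp]
lemma mem_faceDeletion : η ∈ faceDeletion X τ ↔ η ∈ X ∧ ¬ τ ⊆ η := by
  simp only [faceDeletion, mem_filter]

lemma isComplex_faceDeletion (hX : IsComplex X) : IsComplex (faceDeletion X τ) := by
  refine ⟨fun s hs => hX.1 s (mem_faceDeletion.1 hs).1, fun s hs t hts htne => ?_⟩
  obtain ⟨hsX, hτs⟩ := mem_faceDeletion.1 hs
  exact mem_faceDeletion.2 ⟨hX.2 s hsX t hts htne, fun hτt => hτs (hτt.trans hts)⟩

lemma faceDeletion_faceDeletion_of_subset (h : τ ⊆ ρ) :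
    faceDeletion (faceDeletion X ρ) τ = faceDeletion X τ := by
  ext s
  simp only [mem_faceDeletion]
  exact ⟨fun hs => ⟨hs.1.1, hs.2⟩, fun hs => ⟨⟨hs.1, fun hρs => hs.2 (h.trans hρs)⟩, hs.2⟩⟩

lemma linkC_faceDeletion_union (h : Disjoint α σ) :
    linkC (faceDeletion X (α ∪ σ)) σ = faceDeletion (linkC X σ) α := by
  have hunion : ∀ η : Finset V, α ∪ σ ⊆ η ∪ σ ↔ α ⊆ η := fun η => by
    rw [union_subset_iff, and_iff_left subset_union_right]
    exact ⟨fun hα => h.left_le_of_le_sup_right hα, fun hα => hα.trans subset_union_left⟩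
  ext η
  simp only [mem_linkC, mem_faceDeletion, hunion]
  exact ⟨fun hη => ⟨⟨hη.1.1, hη.2.1, hη.2.2.1⟩, hη.2.2.2⟩,
    fun hη => ⟨⟨hη.1.1, fun hc => hη.2 (subset_union_left.trans hc)⟩, hη.1.2.1, hη.1.2.2, hη.2⟩⟩

lemma IsComplex.sdiff_mem_linkC (hX : IsComplex X) (ht : t ∈ X) (hσt : σ ⊆ t)
    (hne : (t \ σ).Nonempty) : t \ σ ∈ linkC X σ :=
  mem_linkC.2 ⟨hX.2 t ht _ sdiff_subset hne, sdiff_disjoint, by rwa [sdiff_union_of_subset hσt]⟩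

lemma isFacet_of_forall_subset (hτ : τ ∈ X) (hρτ : ρ ⊆ τ) (h : ∀ t ∈ X, ρ ⊆ t → t ⊆ τ) :
    IsFacet X τ :=
  ⟨hτ, fun t ht hτt => (h t ht (hρτ.trans hτt)).antisymm hτt⟩

/-- `α` may be empty here, so that the last collapse, of `σ` itself, is covered as well. -/
lemma IsComplex.elemCollapse_faceDeletion_union (hX : IsComplex X) (hασ : Disjoint α σ)
    (hα : α ∪ σ ∈ X) (hβ : β ∈ linkC X σ) (hαβ : α ⊂ β)
    (hcof : ∀ t ∈ linkC X σ, α ⊆ t → t ⊆ β) :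
    ElemCollapse X (faceDeletion X (α ∪ σ)) := by
  obtain ⟨-, hβσ, hβX⟩ := mem_linkC.1 hβ
  have hcof' : ∀ t ∈ X, α ∪ σ ⊆ t → t ⊆ β ∪ σ := by
    intro t ht hαt
    obtain ⟨hα_t, hσt⟩ := union_subset_iff.1 hαt
    have htσ : t \ σ ⊆ β := by
      rcases (t \ σ).eq_empty_or_nonempty with hempty | hne
      · simp [hempty]
      · exact hcof _ (hX.sdiff_mem_linkC ht hσt hne) (subset_sdiff.2 ⟨hα_t, hασ⟩)
    rw [← sdiff_union_of_subset hσt]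
    exact union_subset_union_left htσ
  have hssub : α ∪ σ ⊂ β ∪ σ :=
    sup_lt_sup_of_lt_of_inf_le_inf hαβ (by rw [hβσ.eq_bot]; exact bot_le)
  exact ⟨α ∪ σ, β ∪ σ, hα, isFacet_of_forall_subset hβX hssub.1 hcof', hssub, hcof', rfl⟩

lemma IsComplex.exists_elemCollapse_of_elemCollapse_linkC {Z : Finset (Finset V)}
    (hX : IsComplex X) (h : ElemCollapse (linkC X σ) Z) :
    ∃ X', ElemCollapse X X' ∧ IsComplex X' ∧ faceDeletion X' σ = faceDeletion X σ ∧
      linkC X' σ = Z := by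
  obtain ⟨α, β, hα, hβ, hαβ, hcof, rfl⟩ := h
  obtain ⟨-, hασ, hαX⟩ := mem_linkC.1 hα
  exact ⟨faceDeletion X (α ∪ σ), hX.elemCollapse_faceDeletion_union hασ hαX hβ.1 hαβ hcof,
    isComplex_faceDeletion hX, faceDeletion_faceDeletion_of_subset subset_union_right,
    linkC_faceDeletion_union hασ⟩

lemma IsComplex.exists_collapses_of_collapses_linkC {Z : Finset (Finset V)}
    (hX : IsComplex X) (h : Collapses (linkC X σ) Z) :
    ∃ X', Collapses X X' ∧ IsComplex X' ∧ faceDeletion X' σ = faceDeletion X σ ∧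
      linkC X' σ = Z := by
  generalize hL : linkC X σ = L at h
  induction h using Relation.ReflTransGen.head_induction_on generalizing X with
  | refl => exact ⟨X, .refl, hX, rfl, hL⟩
  | head hstep _ ih =>
    obtain ⟨X₁, hX₁, hcX₁, hfd₁, hL₁⟩ :=
      hX.exists_elemCollapse_of_elemCollapse_linkC (hL ▸ hstep)
    obtain ⟨X₂, hX₂, hcX₂, hfd₂, hL₂⟩ := ih hcX₁ hL₁
    exact ⟨X₂, .head hX₁ hX₂, hcX₂, hfd₂.trans hfd₁, hL₂⟩

lemma IsComplex.elemCollapse_faceDeletion_of_linkC_eq_singleton {v : V} (hX : IsComplex X)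
    (hσ : σ.Nonempty) (h : linkC X σ = {{v}}) : ElemCollapse X (faceDeletion X σ) := by
  have hv : {v} ∈ linkC X σ := h ▸ mem_singleton_self _
  have hσX : σ ∈ X := hX.2 _ (mem_linkC.1 hv).2.2 σ subset_union_right hσ
  simpa using hX.elemCollapse_faceDeletion_union (α := ∅) (disjoint_empty_left σ)
    (by rwa [empty_union]) hv (empty_ssubset.2 (singleton_nonempty v))
    (fun t ht _ => by rw [h, mem_singleton] at ht; exact ht.le)

end

/-- Welker. If the link of a simplex `σ` of `X` is collapsible, then
`X` collapses onto the face-deletion of `σ`. -/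
theorem stmt1 {V : Type u} (X : Finset (Finset V)) (hX : IsComplex X)
    (σ : Finset V) (hσ : σ ∈ X) (h : Collapsible (linkC X σ)) :
    Collapses X (faceDeletion X σ) := by
  obtain ⟨v, hv⟩ := h
  obtain ⟨X', hXX', hX', hfd, hL⟩ := hX.exists_collapses_of_collapses_linkC hv
  rw [← hfd]
  exact hXX'.tail (hX'.elemCollapse_faceDeletion_of_linkC_eq_singleton (hX.1 σ hσ) hL)
end
end

section
/- If a finite simplicial complex X strongly collapses onto a subcomplex Y, then X simplicially collapses onto Y. -/
open Finset

attribute [local instance] Classical.propDecidable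

noncomputable section

universe u v

/-!
Let `v` be dominated by `w`. Every simplex `s` containing `v` lies in a facet, which then
contains `w`, so `s ∪ {w}` is a simplex too. Hence the simplices containing `v` but not `w`
are paired off with their cofaces `s ∪ {w}`. Taking such an `s` of maximal size, its only
proper coface is `s ∪ {w}`, so `s` is a free face; collapsing it removes exactly this pair
and keeps the pairing intact. Repeating removes the open star of `v`.
-/

section StrongCollapse

variable {V : Type u} {X : Finset (Finset V)}

lemma IsComplex.filter_not_subset (hX : IsComplex X) (σ : Finset V) :
    IsComplex (X.filter (fun s => ¬ σ ⊆ s)) := by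
  refine ⟨fun s hs => hX.1 s (mem_filter.mp hs).1, fun s hs t hts ht => ?_⟩
  rw [mem_filter] at hs ⊢
  exact ⟨hX.2 s hs.1 t hts ht, fun hσt => hs.2 (hσt.trans hts)⟩

lemma IsComplex.filter_notMem (hX : IsComplex X) (v : V) :
    IsComplex (X.filter (fun s => v ∉ s)) := by
  simpa only [singleton_subset_iff] using hX.filter_not_subset {v}

lemma exists_isFacet_superset {s : Finset V} (hs : s ∈ X) : ∃ f, IsFacet X f ∧ s ⊆ f := by
  obtain ⟨f, hf, hmax⟩ := exists_max_image (X.filter (s ⊆ ·)) card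
    ⟨s, mem_filter.mpr ⟨hs, Subset.refl s⟩⟩
  rw [mem_filter] at hf
  refine ⟨f, ⟨hf.1, fun t ht hft => ?_⟩, hf.2⟩
  exact (eq_of_subset_of_card_le hft (hmax t (mem_filter.mpr ⟨ht, hf.2.trans hft⟩))).symm

variable {v w : V}

lemma Dominated.insert_mem (hX : IsComplex X) (hdom : Dominated X v w) {s : Finset V}
    (hs : s ∈ X) (hv : v ∈ s) : insert w s ∈ X := by
  obtain ⟨f, hf, hsf⟩ := exists_isFacet_superset hs
  exact hX.2 f hf.1 _ (insert_subset (hdom.2 f hf (hsf hv)) hsf) (insert_nonempty w s)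

lemma IsComplex.erase_mem (hX : IsComplex X) (hvw : w ≠ v) {s : Finset V} (hs : s ∈ X)
    (hv : v ∈ s) : s.erase w ∈ X :=
  hX.2 s hs _ (erase_subset w s) ⟨v, mem_erase.mpr ⟨hvw.symm, hv⟩⟩

lemma filter_notMem_eq_self (hX : IsComplex X) (hvw : w ≠ v)
    (hempty : X.filter (fun s => v ∈ s ∧ w ∉ s) = ∅) :
    X.filter (fun s => v ∉ s) = X := by
  refine filter_true_of_mem fun s hs hv => ?_
  have hmem : s.erase w ∈ X.filter (fun s => v ∈ s ∧ w ∉ s) :=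
    mem_filter.mpr ⟨hX.erase_mem hvw hs hv, mem_erase.mpr ⟨hvw.symm, hv⟩, notMem_erase w s⟩
  simp [hempty] at hmem

lemma eq_or_eq_insert_of_isMaximal (hX : IsComplex X) (hvw : w ≠ v) {σ : Finset V}
    (hvσ : v ∈ σ) (hwσ : w ∉ σ)
    (hmax : ∀ t ∈ X.filter (fun s => v ∈ s ∧ w ∉ s), t.card ≤ σ.card)
    {t : Finset V} (ht : t ∈ X) (hσt : σ ⊆ t) : t = σ ∨ t = insert w σ := by
  by_cases hwt : w ∈ t
  · right
    have hσ_erase : σ ⊆ t.erase w := fun x hx =>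
      mem_erase.mpr ⟨ne_of_mem_of_not_mem hx hwσ, hσt hx⟩
    have hcard := hmax (t.erase w) (mem_filter.mpr
      ⟨hX.erase_mem hvw ht (hσt hvσ), mem_erase.mpr ⟨hvw.symm, hσt hvσ⟩, notMem_erase w t⟩)
    rw [eq_of_subset_of_card_le hσ_erase hcard, insert_erase hwt]
  · exact .inl (eq_of_subset_of_card_le hσt (hmax t (mem_filter.mpr ⟨ht, hσt hvσ, hwt⟩))).symm

lemma elemCollapse_of_isMaximal (hX : IsComplex X) (hvw : w ≠ v)
    (hins : ∀ s ∈ X, v ∈ s → insert w s ∈ X) {σ : Finset V}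
    (hσ : σ ∈ X.filter (fun s => v ∈ s ∧ w ∉ s))
    (hmax : ∀ t ∈ X.filter (fun s => v ∈ s ∧ w ∉ s), t.card ≤ σ.card) :
    ElemCollapse X (X.filter (fun s => ¬ σ ⊆ s)) := by
  obtain ⟨hσX, hvσ, hwσ⟩ := mem_filter.mp hσ
  have hcoface {t} (ht : t ∈ X) (hσt : σ ⊆ t) : t = σ ∨ t = insert w σ :=
    eq_or_eq_insert_of_isMaximal hX hvw hvσ hwσ hmax ht hσt
  refine ⟨σ, insert w σ, hσX, ⟨hins σ hσX hvσ, fun t ht hsub => ?_⟩, ssubset_insert hwσ,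
    fun t ht hσt => ?_, rfl⟩
  · rcases hcoface ht ((subset_insert w σ).trans hsub) with rfl | rfl
    · exact absurd (hsub (mem_insert_self w _)) hwσ
    · rfl
  · rcases hcoface ht hσt with rfl | rfl
    · exact subset_insert w _
    · exact Subset.refl _

lemma collapses_filter_notMem (hX : IsComplex X) (hvw : w ≠ v)
    (hins : ∀ s ∈ X, v ∈ s → insert w s ∈ X) : Collapses X (X.filter (fun s => v ∉ s)) := by
  induction hn : (X.filter (fun s => v ∈ s ∧ w ∉ s)).card using Nat.strong_induction_on
    generalizing X with
  | _ n ih =>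
  by_cases hempty : X.filter (fun s => v ∈ s ∧ w ∉ s) = ∅
  · rw [filter_notMem_eq_self hX hvw hempty]
    exact .refl
  obtain ⟨σ, hσ, hmax⟩ := exists_max_image _ card (nonempty_iff_ne_empty.mpr hempty)
  obtain ⟨-, hvσ, hwσ⟩ := mem_filter.mp hσ
  set X' := X.filter (fun s => ¬ σ ⊆ s)
  have hins' : ∀ s ∈ X', v ∈ s → insert w s ∈ X' := by
    intro s hs hvs
    obtain ⟨hsX, hσs⟩ := mem_filter.mp hs
    refine mem_filter.mpr ⟨hins s hsX hvs, fun hσ_ins => hσs fun x hx => ?_⟩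
    exact (mem_insert.mp (hσ_ins hx)).resolve_left (ne_of_mem_of_not_mem hx hwσ)
  have hlt : (X'.filter (fun s => v ∈ s ∧ w ∉ s)).card < n := by
    rw [← hn, filter_comm]
    exact card_lt_card (filter_ssubset.mpr ⟨σ, hσ, not_not.mpr (Subset.refl σ)⟩)
  have hsame : X'.filter (fun s => v ∉ s) = X.filter (fun s => v ∉ s) := by
    rw [filter_filter]
    exact filter_congr fun s _ => ⟨And.right, fun hvs => ⟨fun hσs => hvs (hσs hvσ), hvs⟩⟩
  rw [← hsame]
  exact .head (elemCollapse_of_isMaximal hX hvw hins hσ hmax)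
    (ih _ hlt (hX.filter_not_subset σ) hins' rfl)

lemma ElemStrongCollapse.collapses {Y : Finset (Finset V)} (hX : IsComplex X)
    (h : ElemStrongCollapse X Y) : Collapses X Y := by
  obtain ⟨v, w, -, hdom, rfl⟩ := h
  exact collapses_filter_notMem hX hdom.1 fun _ => hdom.insert_mem hX

lemma ElemStrongCollapse.isComplex {Y : Finset (Finset V)} (hX : IsComplex X)
    (h : ElemStrongCollapse X Y) : IsComplex Y := by
  obtain ⟨v, -, -, -, rfl⟩ := h
  exact hX.filter_notMem v

end StrongCollapse

/-- Barmak–Minian. A strong collapse is, in particular, a simplicial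
collapse. -/
theorem stmt2 {V : Type u} (X Y : Finset (Finset V)) (hX : IsComplex X)
    (h : StrongCollapses X Y) : Collapses X Y := by
  induction h using Relation.ReflTransGen.head_induction_on with
  | refl => exact .refl
  | head hstep _ ih => exact (hstep.collapses hX).trans (ih (hstep.isComplex hX))
end
end

section
/- For every n ≥ 1, the full arc complex of a crown with n boundary vertices strongly collapses onto its inner arc complex; in particular, since the inner arc complex is an (n−1)-simplex, the full arc complex of a crown is strongly collapsible. -/
/-!
A b-arc `p = (i, j)` is dominated by the c-arc `c i` at its first endpoint once every
b-arc compatible with `p` whose polygonal side strictly contains `i` has been deleted.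
Such a b-arc `q` is compatible with `p` only if the side of `q` strictly contains that of
`p`, so it has more boundary vertices inside. Hence deleting the b-arcs in decreasing order
of the number of vertices inside their side is a sequence of strong collapses, ending at
the simplex spanned by the c-arcs, which in turn strongly collapses onto any of its vertices.
-/

open Finset

attribute [local instance] Classical.propDecidable

noncomputable section

universe u v

/-! ### A combinatorial model of the arc complex of a crown `Δ°ₙ`
(a disk with `n` marked boundary vertices, labelled by `Fin n` in cyclic order, and one
marked interior point `0`). -/

/-- `k` lies in the closed cyclic interval from `i` to `j` (counterclockwise); by
convention the interval is the full circle when `i = j`. -/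
def btwn {n : ℕ} (i j k : Fin n) : Prop :=
  if i = j then True
  else if i.val ≤ j.val then i.val ≤ k.val ∧ k.val ≤ j.val
  else i.val ≤ k.val ∨ k.val ≤ j.val

/-- `k` lies strictly inside the cyclic interval from `i` to `j`. -/
def sbtwn {n : ℕ} (i j k : Fin n) : Prop := btwn i j k ∧ k ≠ i ∧ k ≠ j

/-- Disjointness (compatibility) of two boundary arcs, each encoded by the ordered pair
`(i, j)` of its endpoints, the polygonal side being the cyclic interval `[i..j]`
(the pair `(i, i)` encodes the maximal boundary arc `M i`, whose polygonal side is the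
whole circle).  Two such arcs are compatible iff their polygonal sides are nested
(with no endpoint of the outer one strictly inside the inner interval) or have disjoint
interiors. -/
def bbDisj {n : ℕ} (p q : Fin n × Fin n) : Prop :=
  p = q ∨
  ((∀ k, btwn p.1 p.2 k → btwn q.1 q.2 k) ∧ ¬ sbtwn p.1 p.2 q.1 ∧ ¬ sbtwn p.1 p.2 q.2) ∨
  ((∀ k, btwn q.1 q.2 k → btwn p.1 p.2 k) ∧ ¬ sbtwn q.1 q.2 p.1 ∧ ¬ sbtwn q.1 q.2 p.2) ∨
  ((∀ k, ¬ (sbtwn p.1 p.2 k ∧ btwn q.1 q.2 k)) ∧ ∀ k, ¬ (btwn p.1 p.2 k ∧ sbtwn q.1 q.2 k))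

/-- Arcs of the crown `Δ°ₙ`: `Sum.inl i` is the c-arc `c i` joining the interior marked
point `0` to the boundary vertex `i`; `Sum.inr (i, j)` is the b-arc with endpoints `i, j`
whose polygonal side is the cyclic interval `[i..j]` (`Sum.inr (i, i)` is the maximal
b-arc `M i`). -/
abbrev CrownArc (n : ℕ) := Fin n ⊕ Fin n × Fin n

/-- Disjointness (compatibility, up to homotopy) of arcs of the crown: c-arcs are
pairwise disjoint; a c-arc `c k` is disjoint from a b-arc iff `k` is not strictly
inside its polygonal side; b-arcs are compatible per `bbDisj`. -/
def crownDisj {n : ℕ} : CrownArc n → CrownArc n → Prop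
  | Sum.inl _, Sum.inl _ => True
  | Sum.inl k, Sum.inr p => ¬ sbtwn p.1 p.2 k
  | Sum.inr p, Sum.inl k => ¬ sbtwn p.1 p.2 k
  | Sum.inr p, Sum.inr q => bbDisj p q

/-- Nontriviality: the maximal b-arcs `M i = Sum.inr (i, i)` only exist when `n ≥ 2`
(for `n = 1` they would cut off a bigon and be homotopic to the boundary edge). -/
def crownValid {n : ℕ} : CrownArc n → Prop
  | Sum.inl _ => True
  | Sum.inr p => p.1 ≠ p.2 ∨ 2 ≤ n

/-- The full arc complex of the crown `Δ°ₙ`: the flag complex of pairwise disjoint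
homotopy classes of nontrivial arcs. -/
def crownComplex (n : ℕ) : Finset (Finset (CrownArc n)) :=
  cliqueComplex crownValid crownDisj

/-- The inner arc complex of the crown: the subcomplex spanned by the c-arcs. -/
def innerCrownComplex (n : ℕ) : Finset (Finset (CrownArc n)) :=
  (crownComplex n).filter (fun s => ∀ a ∈ s, a.isLeft = true)

section CliqueComplex

variable {A : Type u} [Fintype A] {P Q : A → Prop} {R : A → A → Prop}

lemma mem_cliqueComplex {s : Finset A} :
    s ∈ cliqueComplex P R ↔ s.Nonempty ∧ (∀ a ∈ s, P a) ∧ ∀ a ∈ s, ∀ b ∈ s, R a b := by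
  simp [cliqueComplex]

lemma cliqueComplex_congr {P' : A → Prop} (h : ∀ a, P a ↔ P' a) :
    cliqueComplex P R = cliqueComplex P' R :=
  congrArg (cliqueComplex · R) (funext fun a => propext (h a))

lemma filter_cliqueComplex [DecidablePred fun s : Finset A => ∀ a ∈ s, Q a] :
    (cliqueComplex P R).filter (fun s => ∀ a ∈ s, Q a) =
      cliqueComplex (fun a => P a ∧ Q a) R := by
  ext s
  simp only [mem_filter, mem_cliqueComplex, forall_and]
  tauto

lemma singleton_mem_cliqueComplex {v : A} (hv : P v) (hvv : R v v) :
    {v} ∈ cliqueComplex P R :=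
  mem_cliqueComplex.2 ⟨singleton_nonempty v, by simpa using hv, by simpa using hvv⟩

lemma insert_mem_cliqueComplex {s : Finset A} {w : A} (hs : s ∈ cliqueComplex P R)
    (hw : P w) (hww : R w w) (hsw : ∀ a ∈ s, R a w ∧ R w a) :
    insert w s ∈ cliqueComplex P R := by
  obtain ⟨-, hP, hR⟩ := mem_cliqueComplex.1 hs
  refine mem_cliqueComplex.2 ⟨insert_nonempty w s, ?_, ?_⟩
  · simpa [hw] using hP
  · simp only [mem_insert, forall_eq_or_imp]
    exact ⟨⟨hww, fun b hb => (hsw b hb).2⟩, fun a ha => ⟨(hsw a ha).1, hR a ha⟩⟩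

lemma cliqueComplex_eq_powerset_filter (T : Finset A) (hR : ∀ a ∈ T, ∀ b ∈ T, R a b) :
    cliqueComplex (· ∈ T) R = T.powerset.filter (·.Nonempty) := by
  ext s
  simp only [mem_cliqueComplex, mem_filter, mem_powerset]
  exact ⟨fun ⟨hne, hT, _⟩ => ⟨hT, hne⟩,
    fun ⟨hT, hne⟩ => ⟨hne, hT, fun a ha b hb => hR a (hT ha) b (hT hb)⟩⟩

lemma elemStrongCollapse_cliqueComplex (hrefl : ∀ a, R a a) (hsymm : ∀ a b, R a b → R b a)
    {v w : A} (hv : P v) (hw : P w) (hwv : w ≠ v)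
    (hdom : ∀ u, P u → R u v → R u w) :
    ElemStrongCollapse (cliqueComplex P R) (cliqueComplex (fun a => P a ∧ a ≠ v) R) := by
  refine ⟨v, w, singleton_mem_cliqueComplex hv (hrefl v), ⟨hwv, ?_⟩, ?_⟩
  · rintro s ⟨hs, hmax⟩ hvs
    obtain ⟨-, hP, hR⟩ := mem_cliqueComplex.1 hs
    -- a facet through `v` can be enlarged by `w`, so it already contains `w`
    have hws : insert w s ∈ cliqueComplex P R :=
      insert_mem_cliqueComplex hs hw (hrefl w) fun a ha =>
        have hRaw := hdom a (hP a ha) (hR a ha v hvs)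
        ⟨hRaw, hsymm _ _ hRaw⟩
    rw [← hmax _ hws (subset_insert w s)]
    exact mem_insert_self w s
  · rw [← filter_cliqueComplex]
    ext s
    simp only [mem_filter, ne_eq]
    exact and_congr_right fun _ => ⟨fun h hvs => h v hvs rfl, fun h a ha hav => h (hav ▸ ha)⟩

/-- The vertices outside `Q` are deleted in decreasing order of `f`; `hdom` says that each is
dominated by a vertex of `Q` once all vertices outside `Q` of larger rank are gone. -/
theorem strongCollapses_cliqueComplex {β : Type v} [LinearOrder β] (hrefl : ∀ a, R a a)
    (hsymm : ∀ a b, R a b → R b a) (f : A → β)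
    (hdom : ∀ a, P a → ¬ Q a → ∃ w, P w ∧ Q w ∧
      ∀ u, P u → R u a → (¬ Q u → f u ≤ f a) → R u w) :
    StrongCollapses (cliqueComplex P R) (cliqueComplex (fun a => P a ∧ Q a) R) := by
  suffices key : ∀ S : Finset A, (∀ a ∈ S, P a ∧ ¬ Q a) →
      StrongCollapses (cliqueComplex (fun a => P a ∧ (Q a ∨ a ∈ S)) R)
        (cliqueComplex (fun a => P a ∧ Q a) R) by
    have := key (univ.filter fun a => P a ∧ ¬ Q a) (by simp)
    rwa [cliqueComplex_congr (P' := P) fun a => by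
      simp only [mem_filter, mem_univ, true_and]; tauto] at this
  intro S
  induction S using Finset.strongInduction with
  | _ S ih =>
    intro hS
    rcases S.eq_empty_or_nonempty with rfl | hne
    · rw [cliqueComplex_congr (P' := fun a => P a ∧ Q a) (by simp)]
      exact .refl
    obtain ⟨p, hpS, hmax⟩ := S.exists_max_image f hne
    obtain ⟨hPp, hQp⟩ := hS p hpS
    obtain ⟨w, hPw, hQw, hw⟩ := hdom p hPp hQp
    have hstep := elemStrongCollapse_cliqueComplex (P := fun a => P a ∧ (Q a ∨ a ∈ S))
      hrefl hsymm ⟨hPp, .inr hpS⟩ ⟨hPw, .inl hQw⟩ (fun h => hQp (h ▸ hQw))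
      fun u ⟨hPu, hu⟩ hup => hw u hPu hup fun hQu => hmax u (hu.resolve_left hQu)
    have herase : ∀ a, ((P a ∧ (Q a ∨ a ∈ S)) ∧ a ≠ p) ↔ P a ∧ (Q a ∨ a ∈ S.erase p) := by
      intro a
      by_cases hap : a = p
      · subst hap; simp [hQp]
      · simp [hap]
    rw [cliqueComplex_congr herase] at hstep
    exact .head hstep (ih _ (erase_ssubset hpS) fun a ha => hS a (mem_of_mem_erase ha))

theorem strongCollapses_powerset_filter_nonempty {T : Finset A} {v : A} (hv : v ∈ T) :
    StrongCollapses (T.powerset.filter (·.Nonempty)) {{v}} := by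
  have hcone := strongCollapses_cliqueComplex (P := (· ∈ T)) (Q := (· = v))
    (R := fun _ _ => True) (fun _ => trivial) (fun _ _ _ => trivial) (fun _ => 0)
    fun a _ _ => ⟨v, hv, rfl, fun _ _ _ _ => trivial⟩
  have hcenter : ∀ a, (a ∈ T ∧ a = v) ↔ a ∈ ({v} : Finset A) := fun a => by
    rw [mem_singleton]
    exact ⟨And.right, fun h => ⟨h ▸ hv, h⟩⟩
  rwa [cliqueComplex_eq_powerset_filter T (fun _ _ _ _ => trivial),
    cliqueComplex_congr hcenter, cliqueComplex_eq_powerset_filter _ (fun _ _ _ _ => trivial)]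
    at hcone

end CliqueComplex

section Crown

variable {n : ℕ}

lemma crownDisj_refl : ∀ a : CrownArc n, crownDisj a a
  | .inl _ => trivial
  | .inr _ => .inl rfl

lemma bbDisj_symm {p q : Fin n × Fin n} : bbDisj p q → bbDisj q p := by
  rintro (h | h | h | ⟨h₁, h₂⟩)
  · exact .inl h.symm
  · exact .inr (.inr (.inl h))
  · exact .inr (.inl h)
  · exact .inr (.inr (.inr ⟨fun k hk => h₂ k hk.symm, fun k hk => h₁ k hk.symm⟩))

lemma crownDisj_symm : ∀ a b : CrownArc n, crownDisj a b → crownDisj b a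
  | .inl _, .inl _, h => h
  | .inl _, .inr _, h => h
  | .inr _, .inl _, h => h
  | .inr _, .inr _, h => bbDisj_symm h

lemma btwn_self_left (i j : Fin n) : btwn i j i := by
  unfold btwn
  split_ifs <;> simp_all

def interiorCard (p : Fin n × Fin n) : ℕ := #(univ.filter (sbtwn p.1 p.2))

/-- Of the four cases of `bbDisj`, only nesting of `p` inside `q` is compatible with the
first endpoint of `p` lying strictly inside the side of `q`. -/
lemma interiorCard_lt_of_bbDisj {p q : Fin n × Fin n} (hqp : bbDisj q p)
    (hs : sbtwn q.1 q.2 p.1) : interiorCard p < interiorCard q := by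
  rcases hqp with rfl | ⟨-, hs', -⟩ | ⟨hpq, hq₁, hq₂⟩ | ⟨h, -⟩
  · exact absurd rfl hs.2.1
  · exact absurd hs hs'
  · refine card_lt_card ⟨fun k hk => ?_, fun hsub => ?_⟩
    · obtain ⟨hk, hkp₁, hkp₂⟩ := (mem_filter.1 hk).2
      refine mem_filter.2 ⟨mem_univ k, hpq k hk, ?_, ?_⟩
      · rintro rfl; exact hq₁ ⟨hk, hkp₁, hkp₂⟩
      · rintro rfl; exact hq₂ ⟨hk, hkp₁, hkp₂⟩
    · exact (mem_filter.1 (hsub (mem_filter.2 ⟨mem_univ _, hs⟩))).2.2.1 rfl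
  · exact (h p.1 ⟨hs, btwn_self_left p.1 p.2⟩).elim

theorem crownComplex_strongCollapses_innerCrownComplex :
    StrongCollapses (crownComplex n) (innerCrownComplex n) := by
  rw [innerCrownComplex, crownComplex, filter_cliqueComplex]
  refine strongCollapses_cliqueComplex crownDisj_refl crownDisj_symm
    (Sum.elim (fun _ => 0) interiorCard) ?_
  rintro (k | p) - hp
  · exact absurd rfl hp
  refine ⟨.inl p.1, trivial, rfl, ?_⟩
  rintro (k | q) - hqp hle
  · trivial
  · exact fun hs => (interiorCard_lt_of_bbDisj hqp hs).not_ge (hle (by simp))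

theorem innerCrownComplex_eq :
    innerCrownComplex n = (univ.image (Sum.inl : Fin n → CrownArc n)).powerset.filter
      (·.Nonempty) := by
  rw [innerCrownComplex, crownComplex, filter_cliqueComplex,
    cliqueComplex_congr (P' := (· ∈ univ.image Sum.inl)) ?_]
  · refine cliqueComplex_eq_powerset_filter _ ?_
    simp only [mem_image, mem_univ, true_and]
    rintro _ ⟨k, rfl⟩ _ ⟨l, rfl⟩
    trivial
  · rintro (k | p) <;> simp [crownValid]

end Crown

/-- For `n ≥ 1` the full arc complex of the crown `Δ°ₙ` strongly
collapses onto its inner arc complex; the latter is an `(n-1)`-simplex (the full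
complex on the `n` c-arcs), and consequently the full arc complex is strongly
collapsible. -/
theorem stmt7 (n : ℕ) (hn : 1 ≤ n) :
    StrongCollapses (crownComplex n) (innerCrownComplex n) ∧
    innerCrownComplex n =
      ((Finset.univ.image (Sum.inl : Fin n → CrownArc n)).powerset.filter
        (·.Nonempty)) ∧
    StrongCollapsible (crownComplex n) := by
  refine ⟨crownComplex_strongCollapses_innerCrownComplex, innerCrownComplex_eq,
    Sum.inl ⟨0, hn⟩, crownComplex_strongCollapses_innerCrownComplex.trans ?_⟩
  rw [innerCrownComplex_eq]
  exact strongCollapses_powerset_filter_nonempty (mem_image_of_mem _ (mem_univ _))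
end
end

section
/- For n ≥ 1, the inner arc complex of a non-orientable crown with n boundary vertices is strongly collapsible. -/
open Finset

attribute [local instance] Classical.propDecidable

noncomputable section

universe u v

/-- Disjointness of two c-arcs of the Möbius crown.  A c-arc is encoded by the pair
`(i, j)` of its endpoints with `i ≤ j` (so `(i, i)` is the maximal c-arc `L i`).
Cutting along the c-arc `(p₁, p₂)` produces a strip whose two sides carry the closed
intervals `[p₁..p₂]` and its closed complement; a c-arc `(q₁, q₂)` is disjoint from it
iff one of its endpoints lies in the first closed interval and the other in the
second. -/
def cDisjMob {n : ℕ} (p q : Fin n × Fin n) : Prop :=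
  p = q ∨
  (p.1 ≤ q.1 ∧ q.1 ≤ p.2 ∧ (q.2 ≤ p.1 ∨ p.2 ≤ q.2)) ∨
  (p.1 ≤ q.2 ∧ q.2 ≤ p.2 ∧ (q.1 ≤ p.1 ∨ p.2 ≤ q.1))

/-- Arcs of the non-orientable crown `M(n)`: `Sum.inl (i, j)` (with `i ≤ j`) is the
c-arc joining `i` and `j` (the maximal c-arc `L i` when `i = j`); `Sum.inr (i, j)` is
the b-arc with endpoints `i, j` whose polygonal side is the cyclic interval `[i..j]`
(the maximal b-arc `M i` when `i = j`). -/
abbrev MobArc (n : ℕ) := (Fin n × Fin n) ⊕ (Fin n × Fin n)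

/-- Disjointness (compatibility, up to homotopy) of arcs of the non-orientable crown:
a c-arc is disjoint from a b-arc iff neither of its endpoints lies strictly inside the
polygonal side of the b-arc. -/
def mobDisj {n : ℕ} : MobArc n → MobArc n → Prop
  | Sum.inl p, Sum.inl q => cDisjMob p q
  | Sum.inl p, Sum.inr q => ¬ sbtwn q.1 q.2 p.1 ∧ ¬ sbtwn q.1 q.2 p.2
  | Sum.inr q, Sum.inl p => ¬ sbtwn q.1 q.2 p.1 ∧ ¬ sbtwn q.1 q.2 p.2
  | Sum.inr p, Sum.inr q => bbDisj p q

/-- Validity: c-arcs are encoded with `i ≤ j`; the maximal b-arcs `M i` are nontrivial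
only when `n ≥ 2`. -/
def mobValid {n : ℕ} : MobArc n → Prop
  | Sum.inl p => p.1 ≤ p.2
  | Sum.inr p => p.1 ≠ p.2 ∨ 2 ≤ n

/-- The full arc complex of the non-orientable crown `M(n)`. -/
def mobComplex (n : ℕ) : Finset (Finset (MobArc n)) :=
  cliqueComplex mobValid mobDisj

/-- The inner arc complex of `M(n)`, the subcomplex spanned by the c-arcs. -/
def innerMobComplex (n : ℕ) : Finset (Finset (MobArc n)) :=
  (mobComplex n).filter (fun s => ∀ a ∈ s, a.isLeft = true)

/-- The inner arc complex of `M(n)`, directly as a flag complex on c-arcs. -/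
def innerMob (n : ℕ) : Finset (Finset (Fin n × Fin n)) :=
  cliqueComplex (fun p => p.1 ≤ p.2) cDisjMob

/-! The c-arcs `(i, j)`, `i ≤ j`, are deleted one at a time in lexicographic order, and only
`L (n-1) = (n-1, n-1)` survives. In a flag complex a vertex `v` is dominated by `w` as soon as
every neighbour of `v` is a neighbour of `w`, and among the arcs not yet deleted, `(i, i)` is
dominated in this sense by `(i, i+1)`, `(i, j)` with `i < j < n-1` by `(j, n-1)`, and
`(i, n-1)` with `i < n-1` by `(i+1, n-1)`. -/

section FlagComplex

variable {A : Type u} [Fintype A]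

def cliqueOn (S : Finset A) (R : A → A → Prop) : Finset (Finset A) :=
  Finset.univ.filter (fun s : Finset A => s.Nonempty ∧ s ⊆ S ∧ ∀ a ∈ s, ∀ b ∈ s, R a b)

variable {S : Finset A} {R : A → A → Prop}

lemma mem_cliqueOn {s : Finset A} :
    s ∈ cliqueOn S R ↔ s.Nonempty ∧ s ⊆ S ∧ ∀ a ∈ s, ∀ b ∈ s, R a b := by
  simp [cliqueOn]

lemma cliqueComplex_eq_cliqueOn (P : A → Prop) (R : A → A → Prop) :
    cliqueComplex P R = cliqueOn (univ.filter P) R := by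
  ext s
  simp [cliqueComplex, mem_cliqueOn, subset_iff]

lemma cliqueOn_singleton {x : A} (hx : R x x) : cliqueOn {x} R = {{x}} := by
  ext s
  simp only [mem_cliqueOn, mem_singleton, subset_singleton_iff]
  constructor
  · rintro ⟨hne, rfl | rfl, -⟩
    exacts [absurd rfl hne.ne_empty, rfl]
  · rintro rfl
    simpa using hx

lemma insert_mem_cliqueOn {s : Finset A} {w : A} (hs : s ∈ cliqueOn S R) (hw : w ∈ S)
    (hww : R w w) (hws : ∀ a ∈ s, R w a ∧ R a w) : insert w s ∈ cliqueOn S R := by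
  obtain ⟨-, hsS, hss⟩ := mem_cliqueOn.1 hs
  refine mem_cliqueOn.2 ⟨insert_nonempty w s, insert_subset hw hsS, ?_⟩
  intro a ha b hb
  rcases mem_insert.1 ha with rfl | ha' <;> rcases mem_insert.1 hb with rfl | hb'
  exacts [hww, (hws b hb').1, (hws a ha').2, hss a ha' b hb']

lemma elemStrongCollapse_cliqueOn_erase {v w : A} (hR : ∀ a, R a a) (hv : v ∈ S)
    (hw : w ∈ S) (hwv : w ≠ v) (hdom : ∀ u ∈ S, (R v u → R w u) ∧ (R u v → R u w)) :
    ElemStrongCollapse (cliqueOn S R) (cliqueOn (S.erase v) R) := by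
  refine ⟨v, w, mem_cliqueOn.2 ⟨singleton_nonempty v, by simpa using hv, by simpa using hR v⟩,
    ⟨hwv, fun s ⟨hs, hmax⟩ hvs => ?_⟩, ?_⟩
  · by_contra hws
    obtain ⟨-, hsS, hss⟩ := mem_cliqueOn.1 hs
    have hins : insert w s ∈ cliqueOn S R := insert_mem_cliqueOn hs hw (hR w)
      fun a ha => ⟨(hdom a (hsS ha)).1 (hss v hvs a ha), (hdom a (hsS ha)).2 (hss a ha v hvs)⟩
    exact hws (hmax _ hins (subset_insert w s) ▸ mem_insert_self w s)
  · ext s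
    simp only [mem_filter, mem_cliqueOn, subset_erase]
    tauto

theorem strongCollapses_cliqueOn_of_dominated [LinearOrder A] (hR : ∀ a, R a a) {t : A}
    (ht : IsGreatest (S : Set A) t)
    (hdom : ∀ v ∈ S, v ≠ t → ∃ w ∈ S, v < w ∧
      ∀ u ∈ S, v ≤ u → (R v u → R w u) ∧ (R u v → R u w)) :
    StrongCollapses (cliqueOn S R) {{t}} := by
  induction S using Finset.induction_on_min with
  | empty => simpa using ht.1
  | insert a s has ih =>
    rcases s.eq_empty_or_nonempty with rfl | ⟨x, hx⟩
    · obtain rfl : t = a := by simpa using ht.1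
      rw [insert_empty, cliqueOn_singleton (hR t)]
      exact .refl
    have hat : a ≠ t := (has x hx).trans_le (ht.2 (mem_insert_of_mem hx)) |>.ne
    have hts : t ∈ s := (mem_insert.1 ht.1).resolve_left hat.symm
    obtain ⟨w, hw, haw, hdom_a⟩ := hdom a (mem_insert_self a s) hat
    have hstep := elemStrongCollapse_cliqueOn_erase hR (mem_insert_self a s) hw haw.ne'
      fun u hu => hdom_a u hu ((mem_insert.1 hu).elim (fun h => h.ge) fun h => (has u h).le)
    rw [erase_insert fun h => lt_irrefl a (has a h)] at hstep
    refine .head hstep (ih ⟨hts, fun u hu => ht.2 (mem_insert_of_mem hu)⟩ fun v hv hvt => ?_)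
    obtain ⟨w, hw, hvw, hdom_v⟩ := hdom v (mem_insert_of_mem hv) hvt
    refine ⟨w, (mem_insert.1 hw).resolve_left ?_, hvw, fun u hu => hdom_v u (mem_insert_of_mem hu)⟩
    rintro rfl
    exact (has v hv).not_gt hvw

theorem strongCollapses_cliqueOn_of_dominated_key {B : Type v} [LinearOrder B]
    (hR : ∀ a, R a a) (f : A → B) (hf : Function.Injective f) {t : A} (htS : t ∈ S)
    (ht : ∀ u ∈ S, f u ≤ f t)
    (hdom : ∀ v ∈ S, v ≠ t → ∃ w ∈ S, f v < f w ∧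
      ∀ u ∈ S, f v ≤ f u → (R v u → R w u) ∧ (R u v → R u w)) :
    StrongCollapses (cliqueOn S R) {{t}} :=
  letI : LinearOrder A := LinearOrder.lift' f hf
  strongCollapses_cliqueOn_of_dominated hR ⟨htS, ht⟩ hdom

end FlagComplex

lemma cDisjMob_iff {n : ℕ} (p q : Fin n × Fin n) :
    cDisjMob p q ↔
      (p.1.val = q.1.val ∧ p.2.val = q.2.val) ∨
      (p.1.val ≤ q.1.val ∧ q.1.val ≤ p.2.val ∧ (q.2.val ≤ p.1.val ∨ p.2.val ≤ q.2.val)) ∨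
      (p.1.val ≤ q.2.val ∧ q.2.val ≤ p.2.val ∧ (q.1.val ≤ p.1.val ∨ p.2.val ≤ q.1.val)) := by
  simp only [cDisjMob, Prod.ext_iff, Fin.ext_iff, Fin.le_def]

lemma cDisjMob_refl {n : ℕ} (p : Fin n × Fin n) : cDisjMob p p := Or.inl rfl

lemma cDisjMob_exists_lex_dominator {m : ℕ} {v : Fin (m + 1) × Fin (m + 1)} (hv : v.1 ≤ v.2)
    (hvt : v ≠ (Fin.last m, Fin.last m)) :
    ∃ w : Fin (m + 1) × Fin (m + 1), w.1 ≤ w.2 ∧ toLex v < toLex w ∧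
      ∀ u : Fin (m + 1) × Fin (m + 1), u.1 ≤ u.2 → toLex v ≤ toLex u →
        (cDisjMob v u → cDisjMob w u) ∧ (cDisjMob u v → cDisjMob u w) := by
  rw [Fin.le_def] at hv
  rw [ne_eq, Prod.ext_iff, Fin.ext_iff, Fin.ext_iff, Fin.val_last] at hvt
  have := v.2.isLt
  obtain ⟨w, hw⟩ : ∃ w : Fin (m + 1) × Fin (m + 1),
      (v.1.val = v.2.val ∧ w.1.val = v.1.val ∧ w.2.val = v.1.val + 1) ∨
      (v.1.val < v.2.val ∧ v.2.val < m ∧ w.1.val = v.2.val ∧ w.2.val = m) ∨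
      (v.1.val < v.2.val ∧ v.2.val = m ∧ w.1.val = v.1.val + 1 ∧ w.2.val = m) := by
    rcases hv.lt_or_eq with hlt | heq
    · rcases Nat.lt_or_ge v.2.val m with hm | hm
      · exact ⟨(v.2, Fin.last m), by simp [hlt, hm]⟩
      · exact ⟨(⟨v.1.val + 1, by omega⟩, Fin.last m), by simp; omega⟩
    · exact ⟨(v.1, ⟨v.1.val + 1, by omega⟩), by simp; omega⟩
  refine ⟨w, ?_, ?_, fun u hu hvu => ?_⟩
  · rw [Fin.le_def]; omega
  · rw [Prod.Lex.toLex_lt_toLex, Fin.lt_def, Fin.lt_def, Fin.ext_iff]; omega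
  · have := u.1.isLt
    have := u.2.isLt
    rw [Prod.Lex.toLex_le_toLex, Fin.lt_def, Fin.le_def, Fin.ext_iff] at hvu
    rw [Fin.le_def] at hu
    simp only [cDisjMob_iff]
    omega

/-- For `n ≥ 1`, the inner arc complex of the non-orientable crown
`M(n)` is strongly collapsible. -/
theorem stmt15 (n : ℕ) (hn : 1 ≤ n) :
    StrongCollapsible (innerMob n) := by
  obtain ⟨m, rfl⟩ := Nat.exists_eq_add_of_le' hn
  refine ⟨(Fin.last m, Fin.last m), ?_⟩
  rw [innerMob, cliqueComplex_eq_cliqueOn]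
  refine strongCollapses_cliqueOn_of_dominated_key cDisjMob_refl toLex toLex.injective
    (by simp) (fun u _ => ?_) fun v hv hvt => ?_
  · exact Prod.Lex.toLex_le_toLex.2 ((Fin.le_last _).lt_or_eq.imp id fun h => ⟨h, Fin.le_last _⟩)
  · obtain ⟨w, hw, hvw, hdom⟩ := cDisjMob_exists_lex_dominator (by simpa using hv) hvt
    exact ⟨w, by simpa using hw, hvw, fun u hu => hdom u (by simpa using hu)⟩
end
end
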